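/- Let S be a compact Riemannian 2-manifold, H a Riemannian manifold, γ : S → H a smooth map, and suppose at each point (with respect to a local orthonormal frame (e₁,e₂) of TS) the differential satisfies ‖dγ(e₁) ∧ dγ(e₂)‖ ≤ (1 + ‖dγ(e₁)‖)(1 + ‖dγ(e₂)‖) in the sense that the area element of the graph-type lift is bounded as in the wedge inequality. Then Area(γ) ≤ Area(S) + 2√(Area(S))·√(∫_S ‖dγ‖²) + ∫_S ‖dγ‖², where Area(γ) = ∫_S ‖(e₁ + dγ(e₁)) ∧ (e₂ + dγ(e₂))‖ dA computed in the product metric on S × H. -/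

import Mathlib

/-!
By AM–GM the area element of the lift is pointwise at most `1 + ‖dγ‖² / 2`:
`(1 + ‖u₁‖²)(1 + ‖u₂‖²) − ⟪u₁, u₂⟫² ≤ (1 + ‖u₁‖²)(1 + ‖u₂‖²) ≤ (1 + (‖u₁‖² + ‖u₂‖²) / 2)²`.
Integrating gives `Area(γ) ≤ Area(S) + ½ ∫ ‖dγ‖²`, which is already below the claimed bound.
-/

open RealInnerProductSpace MeasureTheory

theorem Real.sqrt_mul_sub_sq_le_add_div_two {x y : ℝ} (hxy : 0 ≤ x + y) (c : ℝ) :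
    √(x * y - c ^ 2) ≤ (x + y) / 2 :=
  Real.sqrt_le_iff.mpr ⟨by linarith, by nlinarith [sq_nonneg (x - y), sq_nonneg c]⟩

theorem sqrt_lift_area_element_le {E : Type*} [NormedAddCommGroup E] [InnerProductSpace ℝ E]
    (u v : E) :
    √((1 + ‖u‖ ^ 2) * (1 + ‖v‖ ^ 2) - ⟪u, v⟫ ^ 2) ≤ 1 + (‖u‖ ^ 2 + ‖v‖ ^ 2) / 2 := by
  have h := Real.sqrt_mul_sub_sq_le_add_div_two
    (x := 1 + ‖u‖ ^ 2) (y := 1 + ‖v‖ ^ 2) (by positivity) ⟪u, v⟫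
  linarith

theorem integral_sqrt_lift_area_element_le {S : Type*} [MeasurableSpace S] (μ : Measure S)
    [IsFiniteMeasure μ] {E : Type*} [NormedAddCommGroup E] [InnerProductSpace ℝ E]
    (u v : S → E) (henergy : Integrable (fun s => ‖u s‖ ^ 2 + ‖v s‖ ^ 2) μ) :
    ∫ s, √((1 + ‖u s‖ ^ 2) * (1 + ‖v s‖ ^ 2) - ⟪u s, v s⟫ ^ 2) ∂μ
      ≤ μ.real Set.univ + (∫ s, (‖u s‖ ^ 2 + ‖v s‖ ^ 2) ∂μ) / 2 := by
  calc ∫ s, √((1 + ‖u s‖ ^ 2) * (1 + ‖v s‖ ^ 2) - ⟪u s, v s⟫ ^ 2) ∂μ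
      ≤ ∫ s, (1 + (‖u s‖ ^ 2 + ‖v s‖ ^ 2) / 2) ∂μ :=
        integral_mono_of_nonneg (.of_forall fun _ => Real.sqrt_nonneg _)
          ((integrable_const 1).add (henergy.div_const 2))
          (.of_forall fun s => sqrt_lift_area_element_le (u s) (v s))
    _ = μ.real Set.univ + (∫ s, (‖u s‖ ^ 2 + ‖v s‖ ^ 2) ∂μ) / 2 := by
        rw [integral_add (integrable_const 1) (henergy.div_const 2), integral_const,
          integral_div, smul_eq_mul, mul_one]

theorem area_of_lift_bound_general
    {S : Type*} [MeasurableSpace S] (μ : Measure S) [IsFiniteMeasure μ]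
    {E : Type*} [NormedAddCommGroup E] [InnerProductSpace ℝ E]
    (u1 u2 : S → E)
    (henergy : Integrable (fun s => ‖u1 s‖ ^ 2 + ‖u2 s‖ ^ 2) μ) :
    ∫ s, Real.sqrt ((1 + ‖u1 s‖ ^ 2) * (1 + ‖u2 s‖ ^ 2) - ⟪u1 s, u2 s⟫ ^ 2) ∂μ
      ≤ (μ Set.univ).toReal
        + 2 * Real.sqrt ((μ Set.univ).toReal)
            * Real.sqrt (∫ s, (‖u1 s‖ ^ 2 + ‖u2 s‖ ^ 2) ∂μ)
        + ∫ s, (‖u1 s‖ ^ 2 + ‖u2 s‖ ^ 2) ∂μ := by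
  have hbound := integral_sqrt_lift_area_element_le μ u1 u2 henergy
  have henergy_nonneg : 0 ≤ ∫ s, (‖u1 s‖ ^ 2 + ‖u2 s‖ ^ 2) ∂μ :=
    integral_nonneg fun s => by positivity
  have hcross : 0 ≤ 2 * Real.sqrt ((μ Set.univ).toReal)
      * Real.sqrt (∫ s, (‖u1 s‖ ^ 2 + ‖u2 s‖ ^ 2) ∂μ) := by positivity
  rw [measureReal_def] at hbound
  linarith

/-- area bound for lifts, abstracted: over a finite measure space
`(S, μ)` (with `μ S = Area(S)`), let `u₁ s = dγ(e₁)`, `u₂ s = dγ(e₂)` be the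
derivatives of the lift `γ` in the fibre directions, relative to a local
orthonormal frame `(e₁,e₂)` of `S`.  In the product metric the area element of
the graph-type lift is
`‖(e₁+dγe₁) ∧ (e₂+dγe₂)‖ = √((1+‖u₁‖²)(1+‖u₂‖²) − ⟪u₁,u₂⟫²)`, and
`Area(γ) ≤ Area(S) + 2√(Area S)·√(∫‖dγ‖²) + ∫‖dγ‖²`
where `‖dγ‖² = ‖u₁‖² + ‖u₂‖²` is the energy density. -/
theorem area_of_lift_bound
    {S : Type*} [MeasurableSpace S] (μ : Measure S) [IsFiniteMeasure μ]
    {E : Type*} [NormedAddCommGroup E] [InnerProductSpace ℝ E]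
    (u1 u2 : S → E)
    (henergy : Integrable (fun s => ‖u1 s‖ ^ 2 + ‖u2 s‖ ^ 2) μ)
    (harea : Integrable (fun s =>
      Real.sqrt ((1 + ‖u1 s‖ ^ 2) * (1 + ‖u2 s‖ ^ 2) - ⟪u1 s, u2 s⟫ ^ 2)) μ) :
    ∫ s, Real.sqrt ((1 + ‖u1 s‖ ^ 2) * (1 + ‖u2 s‖ ^ 2) - ⟪u1 s, u2 s⟫ ^ 2) ∂μ
      ≤ (μ Set.univ).toReal
        + 2 * Real.sqrt ((μ Set.univ).toReal)
            * Real.sqrt (∫ s, (‖u1 s‖ ^ 2 + ‖u2 s‖ ^ 2) ∂μ)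
        + ∫ s, (‖u1 s‖ ^ 2 + ‖u2 s‖ ^ 2) ∂μ :=
  area_of_lift_bound_general μ u1 u2 henergy
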